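/- arXiv:1607.02580 — 2 statements merged into one kernel-verified Lean document; each statement's English description precedes it below -/
import Mathlib

section
/- Let k ≥ 2 circles C₁,…,C_k of circumference 2π all share a common arc α, and suppose the intersection in the quotient L of any subcollection of at least two of the circles is a proper connected arc of each circle (containing α). Then the union L₀ = ⋃_{i≠j} (C_i ∩ C_j) is simply connected. -/
/-!
Add the circles one at a time. With `A` the union of the pairwise intersections of `C₁, …, Cₘ`
and `B = ⋃ᵢ (Cᵢ ∩ Cₘ₊₁)`, both `B` and `A ∩ B = ⋃_{i ≠ j} (Cᵢ ∩ Cⱼ ∩ Cₘ₊₁)` are unions of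
connected subsets of `Cₘ₊₁` through the common point. `B` misses a point of `Cₘ₊₁`, because two
proper closed subsets of a circle with connected intersection cannot cover it: the complement
of a connected proper closed subset of a circle is connected. Cutting `Cₘ₊₁` open at that point
turns `A ∩ B ⊆ B` into nested compact intervals, so `B` deformation retracts onto `A ∩ B` and
hence `A ∪ B` onto `A`. By induction `L₀` is contractible.
-/

open Real Set MeasureTheory

open unitInterval

section PairwiseInterUnion

variable {X ι : Type*} {C : ι → Set X}

def pairwiseInterUnion (C : ι → Set X) (s : Finset ι) : Set X :=
  ⋃ ij ∈ s.offDiag, C ij.1 ∩ C ij.2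

theorem pairwiseInterUnion_pair [DecidableEq ι] {a b : ι} (hab : a ≠ b) :
    pairwiseInterUnion C {a, b} = C a ∩ C b := by
  ext x
  simp only [pairwiseInterUnion, mem_iUnion, Finset.mem_offDiag, Finset.mem_insert,
    Finset.mem_singleton]
  aesop

theorem pairwiseInterUnion_insert [DecidableEq ι] {a : ι} {s : Finset ι} (ha : a ∉ s) :
    pairwiseInterUnion C (insert a s) = pairwiseInterUnion C s ∪ ⋃ i ∈ s, C i ∩ C a := by
  ext x
  simp only [pairwiseInterUnion, mem_union, mem_iUnion, Finset.mem_offDiag, Finset.mem_insert,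
    exists_prop, Prod.exists]
  constructor
  · rintro ⟨i, j, ⟨rfl | hi, rfl | hj, hij⟩, hx⟩
    · exact absurd rfl hij
    · exact Or.inr ⟨j, hj, hx.2, hx.1⟩
    · exact Or.inr ⟨i, hi, hx⟩
    · exact Or.inl ⟨i, j, ⟨hi, hj, hij⟩, hx⟩
  · rintro (⟨i, j, ⟨hi, hj, hij⟩, hx⟩ | ⟨i, hi, hx⟩)
    · exact ⟨i, j, ⟨Or.inr hi, Or.inr hj, hij⟩, hx⟩
    · exact ⟨i, a, ⟨Or.inr hi, Or.inl rfl, fun h => ha (h ▸ hi)⟩, hx⟩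

theorem pairwiseInterUnion_inter_biUnion (a : ι) (s : Finset ι) :
    pairwiseInterUnion C s ∩ ⋃ i ∈ s, C i ∩ C a =
      ⋃ ij ∈ s.offDiag, C ij.1 ∩ C ij.2 ∩ C a := by
  ext x
  simp only [pairwiseInterUnion, mem_inter_iff, mem_iUnion, Finset.mem_offDiag, exists_prop,
    Prod.exists]
  constructor
  · rintro ⟨⟨i, j, hij, hxi, hxj⟩, -, -, -, hxa⟩
    exact ⟨i, j, hij, ⟨hxi, hxj⟩, hxa⟩
  · rintro ⟨i, j, hij, ⟨hxi, hxj⟩, hxa⟩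
    exact ⟨⟨i, j, hij, hxi, hxj⟩, i, hij.1, hxi, hxa⟩

end PairwiseInterUnion

section ArcsOfCircles

variable {X : Type*} [TopologicalSpace X]

structure IsCircleParametrization (γ : ℝ → X) (C : Set X) : Prop where
  continuous : Continuous γ
  apply_two_pi : γ (2 * π) = γ 0
  image_Icc : γ '' Icc 0 (2 * π) = C
  injOn_Ico : InjOn γ (Ico 0 (2 * π))

theorem exists_isCircleParametrization {C : Set X} (h : C ≃ₜ Circle) {q : X} (hq : q ∈ C) :
    ∃ γ, IsCircleParametrization γ C ∧ γ 0 = q := by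
  refine ⟨fun t => h.symm (Circle.exp t * h ⟨q, hq⟩), ⟨by fun_prop, by simp, ?_, ?_⟩,
    by simp⟩
  · refine Subset.antisymm (image_subset_iff.2 fun t _ => Subtype.property _) fun x hx => ?_
    refine ⟨Circle.angleDiff (h ⟨q, hq⟩) (h ⟨x, hx⟩),
      ⟨Circle.angleDiff_nonneg _ _, (Circle.angleDiff_lt_two_pi _ _).le⟩, ?_⟩
    simp
  · intro s hs t ht hst
    exact Circle.exp_injOn_Ico (by simp) hs ht
      (mul_right_cancel (h.symm.injective (Subtype.val_injective hst)))

theorem isClosed_of_homeomorph_circle [T2Space X] {C : Set X} (h : C ≃ₜ Circle) : IsClosed C :=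
  (isCompact_iff_compactSpace.2 h.symm.compactSpace).isClosed

structure IsStrongDeformationRetraction {B : Set X} (H : C(↥B × I, X)) (Z : Set X) : Prop where
  apply_zero : ∀ b : B, H (b, 0) = b
  mem : ∀ (b : B) t, H (b, t) ∈ B
  apply_one_mem : ∀ b : B, H (b, 1) ∈ Z
  apply_of_mem : ∀ (b : B) t, (b : X) ∈ Z → H (b, t) = b

namespace IsCircleParametrization

variable {γ : ℝ → X} {C B : Set X} (hγ : IsCircleParametrization γ C)
include hγ

theorem preimage_subset_Ioo (hq : γ 0 ∉ B) : Icc 0 (2 * π) ∩ γ ⁻¹' B ⊆ Ioo 0 (2 * π) := by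
  rintro t ⟨ht, htB⟩
  refine ⟨ht.1.lt_of_ne ?_, ht.2.lt_of_ne ?_⟩ <;> rintro rfl
  · exact hq htB
  · exact hq (hγ.apply_two_pi ▸ htB)

theorem exists_homeomorph_preimage [T2Space X] (hB : IsClosed B) (hBC : B ⊆ C) (hq : γ 0 ∉ B) :
    ∃ e : ↥(Icc 0 (2 * π) ∩ γ ⁻¹' B) ≃ₜ ↥B, ∀ t, (e t : X) = γ t := by
  have : CompactSpace ↥(Icc 0 (2 * π) ∩ γ ⁻¹' B) :=
    isCompact_iff_compactSpace.1 (isCompact_Icc.inter_right (hB.preimage hγ.continuous))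
  let f : ↥(Icc 0 (2 * π) ∩ γ ⁻¹' B) → ↥B := fun t => ⟨γ t, t.2.2⟩
  have hinj : Function.Injective f := fun s t hst => Subtype.ext <|
    hγ.injOn_Ico (Ioo_subset_Ico_self (hγ.preimage_subset_Ioo hq s.2))
      (Ioo_subset_Ico_self (hγ.preimage_subset_Ioo hq t.2)) (congrArg Subtype.val hst)
  have hsurj : Function.Surjective f := by
    rintro ⟨x, hx⟩
    obtain ⟨t, ht, rfl⟩ := hγ.image_Icc.symm ▸ hBC hx
    exact ⟨⟨t, ht, hx⟩, rfl⟩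
  exact ⟨Continuous.homeoOfEquivCompactToT2 (f := Equiv.ofBijective f ⟨hinj, hsurj⟩)
    ((hγ.continuous.comp continuous_subtype_val).subtype_mk _), fun _ => rfl⟩

theorem exists_preimage_eq_Icc [T2Space X] (hB : IsClosed B) (hBp : IsPreconnected B)
    (hBne : B.Nonempty) (hBC : B ⊆ C) (hq : γ 0 ∉ B) :
    ∃ u v, u ≤ v ∧ Icc 0 (2 * π) ∩ γ ⁻¹' B = Icc u v := by
  obtain ⟨e, -⟩ := hγ.exists_homeomorph_preimage hB hBC hq
  have : PreconnectedSpace B := isPreconnected_iff_preconnectedSpace.1 hBp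
  have hSp : IsPreconnected (Icc 0 (2 * π) ∩ γ ⁻¹' B) := isPreconnected_iff_preconnectedSpace.2
    (e.symm.surjective.denseRange.preconnectedSpace e.symm.continuous)
  have hSne : (Icc 0 (2 * π) ∩ γ ⁻¹' B).Nonempty := ⟨_, (e.symm ⟨_, hBne.some_mem⟩).2⟩
  have hS := eq_Icc_of_connected_compact ⟨hSne, hSp⟩
    (isCompact_Icc.inter_right (hB.preimage hγ.continuous))
  exact ⟨_, _, nonempty_Icc.1 (hS ▸ hSne), hS⟩

theorem isPreconnected_diff [T2Space X] (hB : IsClosed B) (hBp : IsPreconnected B)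
    (hBC : B ⊆ C) (hq : γ 0 ∉ B) : IsPreconnected (C \ B) := by
  have himage : γ '' Icc 0 (2 * π) = C := hγ.image_Icc
  rcases B.eq_empty_or_nonempty with rfl | hBne
  · rw [sdiff_empty, ← himage]
    exact isPreconnected_Icc.image _ hγ.continuous.continuousOn
  obtain ⟨u, v, huv, hS⟩ := hγ.exists_preimage_eq_Icc hB hBp hBne hBC hq
  have hu : 0 < u := (hγ.preimage_subset_Ioo hq (hS ▸ left_mem_Icc.2 huv)).1
  have hv : v < 2 * π := (hγ.preimage_subset_Ioo hq (hS ▸ right_mem_Icc.2 huv)).2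
  have hsplit : Icc 0 (2 * π) \ Icc u v = Ico 0 u ∪ Ioc v (2 * π) := by
    ext t
    simp only [mem_sdiff, mem_Icc, mem_union, mem_Ico, mem_Ioc]
    constructor
    · rintro ⟨⟨h0, h1⟩, h2⟩
      by_cases htu : t < u
      · exact Or.inl ⟨h0, htu⟩
      · exact Or.inr ⟨lt_of_not_ge fun htv => h2 ⟨not_lt.1 htu, htv⟩, h1⟩
    · rintro (⟨h0, h1⟩ | ⟨h0, h1⟩)
      · exact ⟨⟨h0, by linarith⟩, fun h => by linarith [h.1]⟩
      · exact ⟨⟨by linarith, h1⟩, fun h => by linarith [h.2]⟩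
  rw [← himage, ← image_sdiff_preimage, ← sdiff_self_inter, hS, hsplit, image_union]
  refine IsPreconnected.union (γ 0) ⟨0, ⟨le_rfl, hu⟩, rfl⟩
    ⟨2 * π, ⟨hv, le_rfl⟩, hγ.apply_two_pi⟩ ?_ ?_
  · exact isPreconnected_Ico.image _ hγ.continuous.continuousOn
  · exact isPreconnected_Ioc.image _ hγ.continuous.continuousOn

theorem exists_isStrongDeformationRetraction [T2Space X] (hB : IsClosed B)
    (hBp : IsPreconnected B) (hBC : B ⊆ C) (hq : γ 0 ∉ B) {Z : Set X} (hZ : IsClosed Z)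
    (hZp : IsPreconnected Z) (hZne : Z.Nonempty) (hZB : Z ⊆ B) :
    ∃ H : C(↥B × I, X), IsStrongDeformationRetraction H Z := by
  obtain ⟨e, he⟩ := hγ.exists_homeomorph_preimage hB hBC hq
  obtain ⟨u, v, -, hSB⟩ := hγ.exists_preimage_eq_Icc hB hBp (hZne.mono hZB) hBC hq
  obtain ⟨a, b, hab, hSZ⟩ :=
    hγ.exists_preimage_eq_Icc hZ hZp hZne (hZB.trans hBC) fun h => hq (hZB h)
  have hZuv : Icc a b ⊆ Icc u v := by
    rw [← hSZ, ← hSB]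
    exact inter_subset_inter_right _ (preimage_mono hZB)
  -- Move the parameter `β x` of `x` linearly to its projection onto the parameter interval of `Z`.
  let β : ↥B → ℝ := fun x => e.symm x
  have hγβ : ∀ x, γ (β x) = x := fun x => by rw [← he, e.apply_symm_apply]
  have hβ : ∀ x, β x ∈ Icc u v := fun x => hSB ▸ (e.symm x).2
  let r : ↥B × I → ℝ := fun p => β p.1 + (p.2 : ℝ) * (projIcc a b hab (β p.1) - β p.1)
  have hr : ∀ p, r p ∈ Icc 0 (2 * π) ∩ γ ⁻¹' B := fun p => hSB ▸
    (convex_Icc u v).add_smul_sub_mem (hβ p.1) (hZuv (projIcc a b hab (β p.1)).2) p.2.2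
  refine ⟨⟨γ ∘ r, hγ.continuous.comp (by fun_prop)⟩, ⟨fun x => ?_, fun x t => (hr (x, t)).2,
    fun x => ?_, fun x t hx => ?_⟩⟩
  · simp [r, hγβ]
  · have : (projIcc a b hab (β x) : ℝ) ∈ Icc 0 (2 * π) ∩ γ ⁻¹' Z := by
      rw [hSZ]; exact (projIcc a b hab _).2
    simpa [r] using this.2
  · have : β x ∈ Icc a b := by
      have hβx := hβ x
      rw [← hSB] at hβx
      rw [← hSZ]
      exact ⟨hβx.1, by rw [mem_preimage, hγβ]; exact hx⟩
    simp [r, projIcc_of_mem hab this, hγβ]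

end IsCircleParametrization

namespace IsStrongDeformationRetraction

variable {B Z : Set X} {H : C(↥B × I, X)}

theorem contractibleSpace (hH : IsStrongDeformationRetraction H Z) (hZB : Z ⊆ B)
    [ContractibleSpace Z] : ContractibleSpace B := by
  let f : C(Z, B) := ⟨fun z => ⟨z, hZB z.2⟩, by fun_prop⟩
  let g : C(B, Z) := ⟨fun b => ⟨H (b, 1), hH.apply_one_mem b⟩, by fun_prop⟩
  have hfg : (f.comp g).Homotopic (ContinuousMap.id B) :=
    ⟨⟨⟨fun p => ⟨H (p.2, σ p.1), hH.mem _ _⟩, by fun_prop⟩, fun b => by simp [f, g],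
      fun b => by simp [hH.apply_zero b]⟩⟩
  have hgf : g.comp f = ContinuousMap.id Z := by
    ext z
    simp [f, g, hH.apply_of_mem ⟨z, hZB z.2⟩ 1 z.2]
  exact (ContinuousMap.HomotopyEquiv.mk g f hfg (by rw [hgf])).contractibleSpace

theorem exists_extension_to_union (hH : IsStrongDeformationRetraction H Z) {A : Set X}
    (hA : IsClosed A) (hB : IsClosed B) (hZ : Z = A ∩ B) :
    ∃ F : C(↥(A ∪ B) × I, X), IsStrongDeformationRetraction F A := by
  classical
  let F : X × I → X := fun p => if h : p.1 ∈ B then H (⟨p.1, h⟩, p.2) else p.1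
  have hF_mem : ∀ x (h : x ∈ B) t, F (x, t) = H (⟨x, h⟩, t) := fun _ h _ => dif_pos h
  have hF_not_mem : ∀ x, x ∉ B → ∀ t, F (x, t) = x := fun _ h _ => dif_neg h
  have hFB : ContinuousOn F (B ×ˢ univ) := by
    rw [continuousOn_iff_continuous_domRestrict]
    have : (B ×ˢ univ).domRestrict F = fun p => H (⟨p.1.1, p.2.1⟩, p.1.2) :=
      funext fun p => hF_mem _ p.2.1 _
    rw [this]
    fun_prop
  have hFA : ContinuousOn F (A ×ˢ univ) := continuous_fst.continuousOn.congr fun p hp => by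
    by_cases h : p.1 ∈ B
    · rw [hF_mem _ h]
      exact hH.apply_of_mem ⟨p.1, h⟩ p.2 (hZ ▸ ⟨hp.1, h⟩)
    · exact hF_not_mem _ h _
  have hF : ContinuousOn F ((A ∪ B) ×ˢ univ) := by
    rw [union_prod]
    exact hFA.union_of_isClosed hFB (hA.prod isClosed_univ) (hB.prod isClosed_univ)
  refine ⟨⟨fun p => F (p.1, p.2),
      hF.comp_continuous (by fun_prop) fun p => ⟨p.1.2, trivial⟩⟩,
    ⟨fun x => ?_, fun x t => ?_, fun x => ?_, fun x t hx => ?_⟩⟩ <;>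
    dsimp only [ContinuousMap.coe_mk] <;> by_cases h : (x : X) ∈ B
  · exact (hF_mem _ h _).trans (hH.apply_zero _)
  · exact hF_not_mem _ h _
  · exact hF_mem _ h _ ▸ Or.inr (hH.mem _ _)
  · rw [hF_not_mem _ h]
    exact x.2
  · exact hF_mem _ h _ ▸ (hZ ▸ hH.apply_one_mem _).1
  · rw [hF_not_mem _ h]
    exact x.2.resolve_right h
  · exact (hF_mem _ h _).trans (hH.apply_of_mem _ _ (hZ ▸ ⟨hx, h⟩))
  · exact hF_not_mem _ h _

end IsStrongDeformationRetraction

theorem isPreconnected_biUnion_of_mem {ι : Type*} {s : Finset ι} {f : ι → Set X} {p : X}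
    (hp : ∀ i ∈ s, p ∈ f i) (hf : ∀ i ∈ s, IsPreconnected (f i)) :
    IsPreconnected (⋃ i ∈ s, f i) := by
  have := isPreconnected_sUnion p (f '' s) (forall_mem_image.2 hp) (forall_mem_image.2 hf)
  rwa [sUnion_image] at this

theorem union_ssubset_of_isPreconnected_inter [T2Space X] {C A A' : Set X}
    (hC : Nonempty (C ≃ₜ Circle)) (hA : IsClosed A) (hA' : IsClosed A') (hAC : A ⊂ C)
    (hA'C : A' ⊂ C) (hAA' : IsPreconnected (A ∩ A')) : A ∪ A' ⊂ C := by
  obtain ⟨q, hqC, hqA⟩ := exists_of_ssubset hAC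
  obtain ⟨q', hq'C, hq'A'⟩ := exists_of_ssubset hA'C
  obtain ⟨γ, hγ, rfl⟩ := exists_isCircleParametrization hC.some hqC
  -- `C \ (A ∩ A')` is connected, so the disjoint open sets `Aᶜ` and `A'ᶜ` cannot split it.
  obtain ⟨x, ⟨hxC, -⟩, hxA, hxA'⟩ :=
    hγ.isPreconnected_diff (hA.inter hA') hAA' (inter_subset_left.trans hAC.subset)
      (fun h => hqA h.1) Aᶜ A'ᶜ hA.isOpen_compl hA'.isOpen_compl
      (fun x hx => not_and_or.1 hx.2) ⟨γ 0, ⟨hqC, fun h => hqA h.1⟩, hqA⟩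
      ⟨q', ⟨hq'C, fun h => hq'A' h.2⟩, hq'A'⟩
  exact (ssubset_iff_of_subset (union_subset hAC.subset hA'C.subset)).2
    ⟨x, hxC, fun h => h.elim hxA hxA'⟩

theorem biUnion_ssubset_of_isPreconnected_inter [T2Space X] {ι : Type*} {C : Set X}
    (hC : Nonempty (C ≃ₜ Circle)) {A : ι → Set X} {p : X} (s : Finset ι)
    (hA : ∀ i ∈ s, IsClosed (A i)) (hAC : ∀ i ∈ s, A i ⊂ C) (hp : ∀ i ∈ s, p ∈ A i)
    (hAA : ∀ i ∈ s, ∀ j ∈ s, IsPreconnected (A i ∩ A j)) : (⋃ i ∈ s, A i) ⊂ C := by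
  classical
  induction s using Finset.induction_on with
  | empty => simpa using ⟨_, (hC.some.symm 1).2⟩
  | insert a s ha ih =>
    have hs : ∀ i ∈ s, i ∈ insert a s := fun i => Finset.mem_insert_of_mem
    have has : a ∈ insert a s := Finset.mem_insert_self a s
    rw [Finset.set_biUnion_insert]
    refine union_ssubset_of_isPreconnected_inter hC (hA a has)
      (isClosed_biUnion_finset fun i hi => hA i (hs i hi)) (hAC a has)
      (ih (fun i hi => hA i (hs i hi)) (fun i hi => hAC i (hs i hi)) (fun i hi => hp i (hs i hi))
        fun i hi j hj => hAA i (hs i hi) j (hs j hj)) ?_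
    rw [inter_iUnion₂]
    exact isPreconnected_biUnion_of_mem (fun i hi => ⟨hp a has, hp i (hs i hi)⟩)
      fun i hi => hAA a has i (hs i hi)

section PairwiseCircles

variable [T2Space X] {ι : Type*} {C : ι → Set X} {p : X}
  (hC : ∀ i, Nonempty (C i ≃ₜ Circle)) (hp : ∀ i, p ∈ C i)
  (hpair : ∀ i j, i ≠ j → C i ∩ C j ⊂ C j ∧ ContractibleSpace ↥(C i ∩ C j))
  (htriple : ∀ i j l, i ≠ j → i ≠ l → j ≠ l → IsPreconnected (C i ∩ C j ∩ C l))
include hC hp hpair htriple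

theorem contractibleSpace_pairwiseInterUnion_insert [DecidableEq ι] {a : ι} {s : Finset ι}
    (ha : a ∉ s) (hs : 2 ≤ s.card) [ContractibleSpace (pairwiseInterUnion C s)] :
    ContractibleSpace (pairwiseInterUnion C (insert a s)) := by
  obtain ⟨i, hi, j, hj, hij⟩ := Finset.one_lt_card.1 hs
  have hia : ∀ i ∈ s, i ≠ a := fun i hi h => ha (h ▸ hi)
  have hCcl : ∀ i, IsClosed (C i) := fun i => isClosed_of_homeomorph_circle (hC i).some
  have hpre : ∀ i ∈ s, IsPreconnected (C i ∩ C a) := fun i hi =>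
    have := (hpair i a (hia i hi)).2
    isPreconnected_iff_preconnectedSpace.2 inferInstance
  set A := pairwiseInterUnion C s
  set B := ⋃ i ∈ s, C i ∩ C a
  have hAcl : IsClosed A := isClosed_biUnion_finset fun _ _ => (hCcl _).inter (hCcl _)
  have hBcl : IsClosed B := isClosed_biUnion_finset fun _ _ => (hCcl _).inter (hCcl a)
  have hBp : IsPreconnected B := isPreconnected_biUnion_of_mem (fun _ _ => ⟨hp _, hp a⟩) hpre
  have hBC : B ⊂ C a := by
    refine biUnion_ssubset_of_isPreconnected_inter (hC a) s (fun _ _ => (hCcl _).inter (hCcl a))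
      (fun i hi => (hpair i a (hia i hi)).1) (fun _ _ => ⟨hp _, hp a⟩) fun i hi j hj => ?_
    rcases eq_or_ne i j with rfl | hij
    · rw [inter_self]
      exact hpre i hi
    · rw [inter_inter_inter_comm, inter_self]
      exact htriple i j a hij (hia i hi) (hia j hj)
  have hABp : IsPreconnected (A ∩ B) := by
    rw [pairwiseInterUnion_inter_biUnion]
    refine isPreconnected_biUnion_of_mem (fun _ _ => ⟨⟨hp _, hp _⟩, hp a⟩) fun ij hij => ?_
    obtain ⟨hi, hj, hij⟩ := Finset.mem_offDiag.1 hij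
    exact htriple _ _ a hij (hia _ hi) (hia _ hj)
  have hpAB : p ∈ A ∩ B :=
    ⟨mem_biUnion (x := (i, j)) (Finset.mem_offDiag.2 ⟨hi, hj, hij⟩) ⟨hp i, hp j⟩,
      mem_biUnion hi ⟨hp i, hp a⟩⟩
  obtain ⟨q, hqC, hqB⟩ := exists_of_ssubset hBC
  obtain ⟨γ, hγ, rfl⟩ := exists_isCircleParametrization (hC a).some hqC
  obtain ⟨H, hH⟩ := hγ.exists_isStrongDeformationRetraction hBcl hBp hBC.subset hqB
    (hAcl.inter hBcl) hABp ⟨p, hpAB⟩ inter_subset_right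
  obtain ⟨F, hF⟩ := hH.exists_extension_to_union hAcl hBcl rfl
  rw [pairwiseInterUnion_insert ha]
  exact hF.contractibleSpace subset_union_left

theorem contractibleSpace_pairwiseInterUnion [DecidableEq ι] (s : Finset ι) (hs : 2 ≤ s.card) :
    ContractibleSpace (pairwiseInterUnion C s) := by
  induction s using Finset.induction_on with
  | empty => simp at hs
  | insert a s ha ih =>
    rcases le_or_gt 2 s.card with hs' | hs'
    · have := ih hs'
      exact contractibleSpace_pairwiseInterUnion_insert hC hp hpair htriple ha hs'
    · rw [Finset.card_insert_of_notMem ha] at hs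
      obtain ⟨b, rfl⟩ := Finset.card_eq_one.1 (by omega : s.card = 1)
      have hab : a ≠ b := fun h => ha (h ▸ Finset.mem_singleton_self a)
      rw [pairwiseInterUnion_pair hab]
      exact (hpair a b hab).2

end PairwiseCircles

end ArcsOfCircles

theorem stmt_17_general {L : Type*} [MetricSpace L]
    (k : ℕ) (hk : 2 ≤ k) (C : Fin k → Set L) (α : Set L)
    (hCcirc : ∀ i, Nonempty (↥(C i) ≃ₜ Circle))
    (hαne : α.Nonempty) (hαsub : ∀ i, α ⊆ C i)
    (hint : ∀ T : Finset (Fin k), 2 ≤ T.card →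
      IsConnected (⋂ i ∈ T, C i) ∧ (∀ i ∈ T, (⋂ j ∈ T, C j) ⊂ C i) ∧
        ContractibleSpace ↥(⋂ i ∈ T, C i)) :
    SimplyConnectedSpace ↥(⋃ i, ⋃ j, ⋃ _ : i ≠ j, C i ∩ C j) := by
  obtain ⟨p, hpα⟩ := hαne
  have hpair : ∀ i j, i ≠ j → C i ∩ C j ⊂ C j ∧ ContractibleSpace ↥(C i ∩ C j) := by
    intro i j hij
    have hT : ⋂ l ∈ ({i, j} : Finset (Fin k)), C l = C i ∩ C j := by simp
    obtain ⟨-, hsub, hcontr⟩ := hint {i, j} (Finset.card_pair hij).ge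
    rw [hT] at hsub hcontr
    exact ⟨hsub j (by simp), hcontr⟩
  have htriple : ∀ i j l, i ≠ j → i ≠ l → j ≠ l → IsPreconnected (C i ∩ C j ∩ C l) := by
    intro i j l hij hil hjl
    have hT : ⋂ m ∈ ({i, j, l} : Finset (Fin k)), C m = C i ∩ C j ∩ C l := by
      simp [inter_assoc]
    have hconn := (hint {i, j, l}
      (by rw [Finset.card_eq_three.2 ⟨i, j, l, hij, hil, hjl, rfl⟩]; norm_num)).1
    exact hT ▸ hconn.isPreconnected
  have hL₀ : ⋃ i, ⋃ j, ⋃ _ : i ≠ j, C i ∩ C j = pairwiseInterUnion C Finset.univ := by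
    ext x
    simp [pairwiseInterUnion]
  have := contractibleSpace_pairwiseInterUnion hCcirc (fun i => hαsub i hpα) hpair htriple
    Finset.univ (by simpa using hk)
  rw [hL₀]
  infer_instance

/-- Let `k ≥ 2` circles `C₁, …, C_k` of circumference `2π` inside a quotient
metric graph `L` all share a common (nonempty) arc `α`, and suppose the
intersection of any subcollection of at least two of the circles is a proper
connected arc of each circle containing `α` — in particular contractible.
Then `L₀ = ⋃_{i≠j} (C_i ∩ C_j)` is simply connected. -/
theorem stmt_17 {L : Type*} [MetricSpace L] [MeasurableSpace L] [BorelSpace L]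
    (k : ℕ) (hk : 2 ≤ k) (C : Fin k → Set L) (α : Set L)
    (hCcirc : ∀ i, Nonempty (↥(C i) ≃ₜ Circle))
    (hClen : ∀ i, μH[1] (C i) = ENNReal.ofReal (2 * π))
    (hCclosed : ∀ i, IsClosed (C i))
    (hαne : α.Nonempty) (hαsub : ∀ i, α ⊆ C i)
    (hint : ∀ T : Finset (Fin k), 2 ≤ T.card →
      IsConnected (⋂ i ∈ T, C i) ∧ (∀ i ∈ T, (⋂ j ∈ T, C j) ⊂ C i) ∧
        ContractibleSpace ↥(⋂ i ∈ T, C i)) :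
    SimplyConnectedSpace ↥(⋃ i, ⋃ j, ⋃ _ : i ≠ j, C i ∩ C j) :=
  stmt_17_general k hk C α hCcirc hαne hαsub hint
end

section
/- In a regular Euclidean (n+1)-gon with n ≥ 6, if two diagonals d₁ = v_a v_c and d₂ = v_b v_d cross (with vertices in cyclic order a, b, c, d) and each has length at most ⌊n/6⌋, then the internal angle at their crossing point is at least the angle in the extremal configuration where the diagonals share an endpoint and both have length exactly ⌊n/6⌋. -/
/-!
The crossing point `p` lies strictly inside the chord `v_a v_c`, so `∠ v_a p v_d` is an exterior
angle of the triangle `p v_c v_d` and dominates its angle at `v_c`. That angle is the inscribed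
angle `∠ v_a v_c v_d = π - π (d - a) / (n + 1)`, and `d - a ≤ (c - a) + (d - b) ≤ 2 ⌊n / 6⌋`.
-/

open Real EuclideanGeometry

/-- The `j`-th vertex of the regular `m`-gon inscribed in the unit circle. -/
noncomputable def polyVertex (m j : ℕ) : EuclideanSpace ℝ (Fin 2) :=
  !₂[Real.cos (2 * π * j / m), Real.sin (2 * π * j / m)]

noncomputable def circlePoint (x : ℝ) : EuclideanSpace ℝ (Fin 2) :=
  !₂[cos x, sin x]

theorem inner_circlePoint (u v : ℝ) :
    inner ℝ (circlePoint u) (circlePoint v) = cos (u - v) := by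
  simp only [circlePoint, PiLp.inner_apply, Fin.sum_univ_two,
    Matrix.cons_val_zero, Matrix.cons_val_one, RCLike.inner_apply, conj_trivial, cos_sub]
  ring

theorem norm_circlePoint (u : ℝ) : ‖circlePoint u‖ = 1 := by
  rw [norm_eq_sqrt_real_inner, inner_circlePoint, sub_self, cos_zero, sqrt_one]

theorem angle_circlePoint {u v : ℝ} (h₀ : u ≤ v) (hπ : v - u ≤ π) :
    InnerProductGeometry.angle (circlePoint u) (circlePoint v) = v - u := by
  rw [InnerProductGeometry.angle, inner_circlePoint, norm_circlePoint, norm_circlePoint,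
    mul_one, div_one, ← cos_neg, neg_sub, arccos_cos (by linarith) hπ]

theorem circlePoint_sub_circlePoint (x y : ℝ) :
    circlePoint x - circlePoint y =
      (2 * sin ((x - y) / 2)) • circlePoint ((x + y) / 2 + π / 2) := by
  ext i
  fin_cases i <;> simp only [circlePoint, PiLp.sub_apply, PiLp.smul_apply, smul_eq_mul,
      cos_add_pi_div_two, sin_add_pi_div_two, Fin.zero_eta, Fin.mk_one, Matrix.cons_val_zero, Matrix.cons_val_one,
      cos_sub_cos, sin_sub_sin]
  ring

theorem angle_circlePoint_sub {x y z : ℝ} (hxy : x < y) (hyz : y < z) (hzx : z - x < 2 * π) :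
    InnerProductGeometry.angle (circlePoint x - circlePoint y) (circlePoint z - circlePoint y)
      = π - (z - x) / 2 := by
  have hsin_xy : sin ((x - y) / 2) < 0 := by
    rw [← neg_sub, neg_div, sin_neg, neg_lt_zero]
    exact sin_pos_of_pos_of_lt_pi (by linarith) (by linarith)
  have hsin_zy : 0 < sin ((z - y) / 2) := sin_pos_of_pos_of_lt_pi (by linarith) (by linarith)
  -- Each chord is a scaled unit vector; the first scale is negative and the two directions
  -- differ by `(z - x) / 2`.
  rw [circlePoint_sub_circlePoint, circlePoint_sub_circlePoint,
    InnerProductGeometry.angle_smul_left_of_neg _ _ (by linarith),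
    InnerProductGeometry.angle_smul_right_of_pos _ _ (by linarith),
    InnerProductGeometry.angle_neg_left, angle_circlePoint (by linarith) (by linarith)]
  ring

theorem angle_polyVertex {m i j l : ℕ} (hij : i < j) (hjl : j < l) (hlm : l < m) :
    ∠ (polyVertex m i) (polyVertex m j) (polyVertex m l) = π - π * ((l - i : ℕ) : ℝ) / m := by
  have hm : (0 : ℝ) < m := by exact_mod_cast Nat.zero_lt_of_lt hlm
  have hlt : ∀ {s t : ℕ}, s < t → 2 * π * s / m < 2 * π * t / m := fun hst => by gcongr
  have hli : ((l - i : ℕ) : ℝ) < m := by exact_mod_cast (Nat.sub_le l i).trans_lt hlm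
  have harc : 2 * π * l / m - 2 * π * i / m = 2 * π * ((l - i : ℕ) : ℝ) / m := by
    rw [Nat.cast_sub (hij.trans hjl).le]; ring
  have harc_lt : 2 * π * l / m - 2 * π * i / m < 2 * π := by
    rw [harc, div_lt_iff₀ hm]; nlinarith [pi_pos]
  change InnerProductGeometry.angle (circlePoint _ - circlePoint _)
    (circlePoint _ - circlePoint _) = _
  rw [angle_circlePoint_sub (hlt hij) (hlt hjl) harc_lt, harc]
  ring

theorem Sbtw.angle_le_exterior_angle {V P : Type*} [NormedAddCommGroup V] [InnerProductSpace ℝ V]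
    [MetricSpace P] [NormedAddTorsor V P] {a p c : P} (d : P) (h : Sbtw ℝ a p c) :
    ∠ a c d ≤ ∠ a p d := by
  have hext := exterior_angle_eq_angle_add_angle (p₃ := d) a h
  have hray : ∠ d c p = ∠ d c a := h.symm.angle_eq_right d
  linarith [angle_nonneg p d c, angle_comm a c d, angle_comm a p d]

theorem stmt_19_general (n a b c d : ℕ)
    (hab : a < b) (hbc : b < c) (hcd : c < d) (hdn : d ≤ n)
    (hd₁ : c - a ≤ n / 6) (hd₂ : d - b ≤ n / 6)
    (p : EuclideanSpace ℝ (Fin 2))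
    (hp₁ : p ∈ segment ℝ (polyVertex (n + 1) a) (polyVertex (n + 1) c))
    (hpa : p ≠ polyVertex (n + 1) a) (hpc : p ≠ polyVertex (n + 1) c) :
    π * (1 - 2 * ((n / 6 : ℕ) : ℝ) / (n + 1)) ≤
      ∠ (polyVertex (n + 1) a) p (polyVertex (n + 1) d) := by
  have hinscribed := angle_polyVertex (m := n + 1) (hab.trans hbc) hcd (by omega)
  have hexterior := Sbtw.angle_le_exterior_angle (polyVertex (n + 1) d)
    ⟨mem_segment_iff_wbtw.mp hp₁, hpa, hpc⟩
  have hspan : ((d - a : ℕ) : ℝ) ≤ 2 * ((n / 6 : ℕ) : ℝ) := by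
    exact_mod_cast (by omega : d - a ≤ 2 * (n / 6))
  calc π * (1 - 2 * ((n / 6 : ℕ) : ℝ) / (n + 1))
      = π - π * (2 * ((n / 6 : ℕ) : ℝ)) / ((n + 1 : ℕ) : ℝ) := by push_cast; ring
    _ ≤ π - π * ((d - a : ℕ) : ℝ) / ((n + 1 : ℕ) : ℝ) := by gcongr
    _ ≤ _ := hinscribed ▸ hexterior

/-- In a regular Euclidean `(n+1)`-gon with `n ≥ 6`, if two diagonals
`d₁ = v_a v_c` and `d₂ = v_b v_d` cross (vertices in cyclic order `a,b,c,d`)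
and each has length at most `⌊n/6⌋` (in edges of the shorter boundary arc),
then the internal angle at the crossing point `p` (the angle of the component
of the complement containing the centre, namely `∠ v_a p v_d`) is at least the
angle `π·(1 − 2⌊n/6⌋/(n+1))` of the extremal configuration in which the two
diagonals share an endpoint and both have length exactly `⌊n/6⌋`. -/
theorem stmt_19 (n a b c d : ℕ) (hn : 6 ≤ n)
    (hab : a < b) (hbc : b < c) (hcd : c < d) (hdn : d ≤ n)
    (hd₁ : c - a ≤ n / 6) (hd₂ : d - b ≤ n / 6)
    (p : EuclideanSpace ℝ (Fin 2))
    (hp₁ : p ∈ segment ℝ (polyVertex (n + 1) a) (polyVertex (n + 1) c))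
    (hp₂ : p ∈ segment ℝ (polyVertex (n + 1) b) (polyVertex (n + 1) d))
    (hpa : p ≠ polyVertex (n + 1) a) (hpc : p ≠ polyVertex (n + 1) c)
    (hpb : p ≠ polyVertex (n + 1) b) (hpd : p ≠ polyVertex (n + 1) d) :
    π * (1 - 2 * ((n / 6 : ℕ) : ℝ) / (n + 1)) ≤
      ∠ (polyVertex (n + 1) a) p (polyVertex (n + 1) d) :=
  stmt_19_general n a b c d hab hbc hcd hdn hd₁ hd₂ p hp₁ hpa hpc
end
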